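/- Let λ ∈ (1/2, 1) be such that 1/λ is a Garsia number. Then there exists C > 0 such that for any n and any two distinct words a, a' ∈ {0,1}^n, the periodic points satisfy |π_λ(a^∞) − π_λ(a'^∞)| ≥ C/2^n, where π_λ(a^∞) = (∑_{i=1}^n a_i λ^{i−1})/(1 − λ^n). -/

import Mathlib

/-!
Put `β = 1/λ` and `e = a - a' ∈ {-1, 0, 1}ⁿ`. The difference of the two periodic points is
`λⁿ⁻¹ Q(β) / (1 - λⁿ)` with `Q = ∑ eᵢ Xⁿ⁻¹⁻ⁱ` the reflected polynomial. `Q(β) ≠ 0`, since the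
minimal polynomial of `β` has constant coefficient `±2` and so cannot divide a nonzero
polynomial whose lowest coefficient is `±1`. Being a nonzero algebraic integer, `Q(β)` has
integral norm, so `∏_σ |σ Q(β)| ≥ 1` over the complex embeddings `σ` of `ℚ(β)`. For the
embeddings `σ` other than the real one, `|σ β| > 1` gives `|σ Q(β)| ≤ |σ β|ⁿ / (|σ β| - 1)`, and
`∏_{σ ≠ id} |σ β| = 2 / β`; hence `|Q(β)| ≥ D (β / 2)ⁿ`.
-/

open Polynomial IntermediateField

section Embeddings

variable {K : Type*} [Field K] [Algebra ℚ K] [FiniteDimensional ℚ K]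

theorem prod_norm_embeddings_eq_abs_norm (x : K) :
    ∏ σ : K →ₐ[ℚ] ℂ, ‖σ x‖ = |(Algebra.norm ℚ x : ℝ)| := by
  rw [← norm_prod, ← Algebra.norm_eq_prod_embeddings ℚ ℂ x, eq_ratCast, ← Complex.ofReal_ratCast,
    Complex.norm_real, Real.norm_eq_abs]

theorem one_le_prod_norm_embeddings {x : K} (hx : IsIntegral ℤ x) (hx0 : x ≠ 0) :
    1 ≤ ∏ σ : K →ₐ[ℚ] ℂ, ‖σ x‖ := by
  obtain ⟨m, hm⟩ := IsIntegrallyClosed.isIntegral_iff.mp (Algebra.isIntegral_norm ℚ hx)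
  have hm0 : m ≠ 0 := by
    rintro rfl
    exact Algebra.norm_ne_zero_iff.mpr hx0 (by rw [← hm, map_zero])
  rw [prod_norm_embeddings_eq_abs_norm, ← hm, eq_intCast]
  exact_mod_cast Int.one_le_abs hm0

theorem prod_norm_embeddings_powerBasis_gen (pb : PowerBasis ℚ K) :
    ∏ σ : K →ₐ[ℚ] ℂ, ‖σ pb.gen‖ = |((minpoly ℚ pb.gen).coeff 0 : ℝ)| := by
  rw [prod_norm_embeddings_eq_abs_norm, Algebra.PowerBasis.norm_gen_eq_coeff_zero_minpoly]
  push_cast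
  rw [abs_mul, abs_pow, abs_neg, abs_one, one_pow, one_mul]

end Embeddings

theorem norm_aeval_le_of_abs_coeff_le_one {z : ℂ} (hz : 1 < ‖z‖) {Q : ℤ[X]} {n : ℕ}
    (hdeg : Q.natDegree < n) (hQ : ∀ k, |Q.coeff k| ≤ 1) :
    ‖aeval z Q‖ ≤ ‖z‖ ^ n / (‖z‖ - 1) := by
  rw [aeval_eq_sum_range' hdeg]
  calc ‖∑ i ∈ Finset.range n, Q.coeff i • z ^ i‖
      ≤ ∑ i ∈ Finset.range n, ‖z‖ ^ i := by
        refine (norm_sum_le _ _).trans (Finset.sum_le_sum fun i _ => ?_)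
        rw [zsmul_eq_mul, norm_mul, norm_pow, Complex.norm_intCast]
        exact mul_le_of_le_one_left (by positivity) (mod_cast hQ i)
    _ = (‖z‖ ^ n - 1) / (‖z‖ - 1) := geom_sum_eq hz.ne' n
    _ ≤ ‖z‖ ^ n / (‖z‖ - 1) := by gcongr; linarith

theorem aeval_ne_zero_of_abs_coeff_le_one {S : Type*} [CommRing S] [IsDomain S] [CharZero S]
    {s : S} (hs : IsIntegral ℤ s) (hc : 1 < |(minpoly ℤ s).coeff 0|) {Q : ℤ[X]} (hQ0 : Q ≠ 0)
    (hQ : ∀ k, |Q.coeff k| ≤ 1) : aeval s Q ≠ 0 := by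
  intro h
  obtain ⟨R, rfl⟩ := minpoly.isIntegrallyClosed_dvd hs h
  have hc0 : (minpoly ℤ s).coeff 0 ≠ 0 := by rintro h; simp [h] at hc
  have htc : (minpoly ℤ s).trailingCoeff = (minpoly ℤ s).coeff 0 := by
    rw [trailingCoeff, natTrailingDegree_eq_zero.mpr (Or.inr hc0)]
  have hR : R.trailingCoeff ≠ 0 := by
    rintro hR
    simp [trailingCoeff_eq_zero.mp hR] at hQ0
  have := hQ (minpoly ℤ s * R).natTrailingDegree
  rw [← trailingCoeff, trailingCoeff_mul, htc, abs_mul] at this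
  nlinarith [Int.one_le_abs hR]

open Finset in
theorem exists_pos_mul_le_norm_aeval {K : Type*} [Field K] [Algebra ℚ K] [FiniteDimensional ℚ K]
    {γ : K} (hγ : IsIntegral ℤ γ) (hconj : ∀ σ : K →ₐ[ℚ] ℂ, 1 < ‖σ γ‖) (σ₀ : K →ₐ[ℚ] ℂ) :
    ∃ D > (0 : ℝ), ∀ n : ℕ, ∀ Q : ℤ[X], aeval γ Q ≠ 0 → Q.natDegree < n →
      (∀ k, |Q.coeff k| ≤ 1) → D * (‖σ₀ γ‖ / ∏ σ : K →ₐ[ℚ] ℂ, ‖σ γ‖) ^ n ≤ ‖σ₀ (aeval γ Q)‖ := by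
  classical
  set R := ∏ σ ∈ univ.erase σ₀, ‖σ γ‖
  have hpos : ∀ σ : K →ₐ[ℚ] ℂ, 0 < ‖σ γ‖ - 1 := fun σ => sub_pos.mpr (hconj σ)
  have hR : ‖σ₀ γ‖ / ∏ σ : K →ₐ[ℚ] ℂ, ‖σ γ‖ = R⁻¹ := by
    rw [← mul_prod_erase _ _ (mem_univ σ₀), div_mul_cancel_left₀ (one_pos.trans (hconj σ₀)).ne']
  refine ⟨∏ σ ∈ univ.erase σ₀, (‖σ γ‖ - 1), prod_pos fun σ _ => hpos σ,
    fun n Q hQ hdeg hcoeff => ?_⟩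
  have hlower := one_le_prod_norm_embeddings
    (adjoin_le_integralClosure hγ (aeval_mem_adjoin_singleton ℤ γ)) hQ
  rw [← mul_prod_erase _ _ (mem_univ σ₀)] at hlower
  have hupper : ∏ σ ∈ univ.erase σ₀, ‖σ (aeval γ Q)‖
      ≤ R ^ n / ∏ σ ∈ univ.erase σ₀, (‖σ γ‖ - 1) := by
    rw [← prod_pow, ← prod_div_distrib]
    refine prod_le_prod (fun _ _ => norm_nonneg _) fun σ _ => ?_
    rw [show σ (aeval γ Q) = aeval (σ γ) Q from (aeval_algHom_apply (σ.restrictScalars ℤ) γ Q).symm]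
    exact norm_aeval_le_of_abs_coeff_le_one (hconj σ) hdeg hcoeff
  have key := hlower.trans (mul_le_mul_of_nonneg_left hupper (norm_nonneg _))
  rw [mul_div_assoc', le_div_iff₀ (prod_pos fun σ _ => hpos σ), one_mul] at key
  rwa [hR, inv_pow, ← div_eq_mul_inv,
    div_le_iff₀ (pow_pos (prod_pos fun σ _ => one_pos.trans (hconj σ)) n)]

theorem exists_pos_mul_le_abs_aeval {β : ℝ} (hint : IsIntegral ℤ β)
    (hnorm : |(minpoly ℤ β).coeff 0| = 2)
    (hconj : ∀ z : ℂ, aeval z (minpoly ℤ β) = 0 → 1 < ‖z‖) :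
    ∃ D > (0 : ℝ), ∀ n : ℕ, ∀ Q : ℤ[X], Q ≠ 0 → Q.natDegree < n → (∀ k, |Q.coeff k| ≤ 1) →
      D * (|β| / 2) ^ n ≤ |aeval β Q| := by
  have hβℚ : IsIntegral ℚ β := hint.tower_top
  have := adjoin.finiteDimensional hβℚ
  let pb := adjoin.powerBasis hβℚ
  have hgen : algebraMap ℚ⟮β⟯ ℝ pb.gen = β := by
    rw [adjoin.powerBasis_gen, AdjoinSimple.algebraMap_gen]
  have hminpoly : minpoly ℚ pb.gen = (minpoly ℤ β).map (algebraMap ℤ ℚ) := by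
    rw [adjoin.powerBasis_gen]
    exact (minpoly_gen ℚ β).trans (minpoly.isIntegrallyClosed_eq_field_fractions ℚ ℝ hint)
  have hgenint : IsIntegral ℤ pb.gen :=
    (isIntegral_algebraMap_iff (algebraMap ℚ⟮β⟯ ℝ).injective).mp (by rwa [hgen])
  have hgen_conj : ∀ σ : ℚ⟮β⟯ →ₐ[ℚ] ℂ, 1 < ‖σ pb.gen‖ := fun σ => hconj _ <| by
    have := minpoly.aeval_algHom ℚ σ pb.gen
    rwa [hminpoly, aeval_map_algebraMap] at this
  have hc : |((minpoly ℚ pb.gen).coeff 0 : ℝ)| = 2 := by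
    rw [hminpoly, coeff_map, eq_intCast, Rat.cast_intCast, ← Int.cast_abs, hnorm, Int.cast_ofNat]
  have hprod : ∏ σ : ℚ⟮β⟯ →ₐ[ℚ] ℂ, ‖σ pb.gen‖ = 2 :=
    (prod_norm_embeddings_powerBasis_gen pb).trans hc
  let σ₀ : ℚ⟮β⟯ →ₐ[ℚ] ℂ := (Complex.ofRealAm.restrictScalars ℚ).comp (val _)
  have hσ₀ : ∀ x, σ₀ x = algebraMap ℚ⟮β⟯ ℝ x := fun _ => rfl
  obtain ⟨D, hD, hbound⟩ := exists_pos_mul_le_norm_aeval hgenint hgen_conj σ₀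
  refine ⟨D, hD, fun n Q hQ0 hdeg hQ => ?_⟩
  have hx : algebraMap ℚ⟮β⟯ ℝ (aeval pb.gen Q) = aeval β Q := by
    rw [← aeval_algebraMap_apply, hgen]
  have hx0 : aeval pb.gen Q ≠ 0 := fun h => aeval_ne_zero_of_abs_coeff_le_one hint
    (by rw [hnorm]; norm_num) hQ0 hQ (by rw [← hx, h, map_zero])
  simpa only [hprod, hσ₀, hx, hgen, Complex.norm_real, Real.norm_eq_abs] using
    hbound n Q hx0 hdeg hQ

theorem aeval_ofFn {R A : Type*} [CommSemiring R] [DecidableEq R] [Semiring A] [Algebra R A]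
    {n : ℕ} (v : Fin n → R) (x : A) :
    aeval x (ofFn n v) = ∑ i, algebraMap R A (v i) * x ^ (i : ℕ) := by
  simp [ofFn_eq_sum_monomial, aeval_monomial]

theorem exists_pos_div_two_pow_le_abs_sum {lam : ℝ} (hlam : lam ≠ 0)
    (hint : IsIntegral ℤ (1 / lam)) (hnorm : |(minpoly ℤ (1 / lam)).coeff 0| = 2)
    (hconj : ∀ z : ℂ, aeval z (minpoly ℤ (1 / lam)) = 0 → 1 < ‖z‖) :
    ∃ C > (0 : ℝ), ∀ n : ℕ, ∀ e : Fin n → ℤ, (∀ i, |e i| ≤ 1) → e ≠ 0 →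
      C / 2 ^ n ≤ |∑ i, (e i : ℝ) * lam ^ (i : ℕ)| := by
  obtain ⟨D, hD, hbound⟩ := exists_pos_mul_le_abs_aeval hint hnorm hconj
  refine ⟨D * |1 / lam|, by positivity, fun n e he he0 => ?_⟩
  set P := ofFn n e
  have hP0 : P ≠ 0 := fun h => he0 (injective_ofFn n (h.trans (map_zero _).symm))
  obtain ⟨m, rfl⟩ : ∃ m, n = m + 1 := Nat.exists_eq_succ_of_ne_zero (ne_zero_of_ofFn_ne_zero hP0)
  have hPdeg : P.natDegree ≤ m := Nat.lt_succ_iff.mp (ofFn_natDegree_lt (Nat.le_add_left _ _) e)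
  have hPcoeff : ∀ k, |P.coeff k| ≤ 1 := fun k => by
    rcases lt_or_ge k (m + 1) with hk | hk
    · rw [ofFn_coeff_eq_val_of_lt e hk]; exact he _
    · rw [ofFn_coeff_eq_zero_of_ge e hk, abs_zero]; exact zero_le_one
  have hQ := hbound (m + 1) (reflect m P) (by rwa [Ne, reflect_eq_zero_iff])
    ((natDegree_reflect_le).trans_lt (by rw [max_eq_left hPdeg]; omega))
    fun k => by rw [coeff_reflect]; exact hPcoeff _
  have heval : aeval (1 / lam) (reflect m P) * lam ^ m = aeval lam P := by
    let _ : Invertible lam := invertibleOfNonzero hlam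
    rw [aeval_def, aeval_def, one_div, ← invOf_eq_inv, eval₂_reflect_mul_pow _ _ _ _ hPdeg]
  have hsum : ∑ i, (e i : ℝ) * lam ^ (i : ℕ) = aeval lam P := by
    rw [aeval_ofFn]; rfl
  rw [hsum, ← heval, abs_mul, abs_pow]
  calc D * |1 / lam| / 2 ^ (m + 1) = D * (|1 / lam| / 2) ^ (m + 1) * |lam| ^ m := by
        rw [div_pow, abs_div, abs_one, div_pow, one_pow, pow_succ]
        field_simp
        ring
    _ ≤ _ := by gcongr

theorem exists_int_eq_sub_of_zero_or_one {x y : ℝ} (hx : x = 0 ∨ x = 1) (hy : y = 0 ∨ y = 1) :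
    ∃ k : ℤ, |k| ≤ 1 ∧ (k : ℝ) = x - y := by
  rcases hx with rfl | rfl <;> rcases hy with rfl | rfl
  exacts [⟨0, by norm_num⟩, ⟨-1, by norm_num⟩, ⟨1, by norm_num⟩, ⟨0, by norm_num⟩]

/-- Separation of the periodic points `π_λ(a^∞) = (∑_{i=1}^n a_i λ^{i-1})/(1-λ^n)` when
`1/λ` is a Garsia number. -/
theorem stmt_8 (lam : ℝ) (hlam : lam ∈ Set.Ioo (1 / 2 : ℝ) 1)
    (hint : IsIntegral ℤ (1 / lam))
    (hnorm : |(minpoly ℤ (1 / lam)).coeff 0| = 2)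
    (hconj : ∀ z : ℂ, Polynomial.aeval z (minpoly ℤ (1 / lam)) = 0 → 1 < ‖z‖) :
    ∃ C > (0 : ℝ), ∀ n : ℕ, ∀ a a' : Fin n → ℝ,
      (∀ i, a i = 0 ∨ a i = 1) → (∀ i, a' i = 0 ∨ a' i = 1) → a ≠ a' →
      C / 2 ^ n ≤
        |(∑ i : Fin n, a i * lam ^ (i : ℕ)) / (1 - lam ^ n)
          - (∑ i : Fin n, a' i * lam ^ (i : ℕ)) / (1 - lam ^ n)| := by
  have hlam0 : 0 < lam := by linarith [hlam.1]
  obtain ⟨C, hC, hsep⟩ := exists_pos_div_two_pow_le_abs_sum hlam0.ne' hint hnorm hconj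
  refine ⟨C, hC, fun n a a' ha ha' hne => ?_⟩
  choose e he hae using fun i => exists_int_eq_sub_of_zero_or_one (ha i) (ha' i)
  have he0 : e ≠ 0 := fun h => hne <| funext fun i => sub_eq_zero.mp <| by simp [← hae, h]
  have hsum : ∑ i, a i * lam ^ (i : ℕ) - ∑ i, a' i * lam ^ (i : ℕ)
      = ∑ i, (e i : ℝ) * lam ^ (i : ℕ) := by
    simp only [hae, sub_mul, Finset.sum_sub_distrib]
  have hn : n ≠ 0 := by
    rintro rfl
    exact he0 (Subsingleton.elim _ _)
  have hden : 0 < 1 - lam ^ n := sub_pos.mpr (pow_lt_one₀ hlam0.le hlam.2 hn)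
  rw [div_sub_div_same, hsum, abs_div, abs_of_pos hden]
  exact (hsep n e he he0).trans
    (le_div_self (abs_nonneg _) hden (by linarith [pow_pos hlam0 n]))
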